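/- Let W₀, W₁, W₂ be complex Hilbert spaces with real structures and let L₀₁ ⊆ W₀ ⊕ (−W₁), L₁₂ ⊆ W₁ ⊕ (−W₂) be Lagrangians. If the map σ(v₀,v₁,v₁',v₂) = v₁ − v₁' has closed range when restricted to L₀₁ ⊕ L₁₂, then the composition L₀₂ = L₀₁ ∘ L₁₂ (composition of linear relations) is a Lagrangian in W₀ ⊕ (−W₂). -/

import Mathlib

noncomputable section

/-- A real structure on a complex inner product space: an anti-unitary involution `v ↦ v̄`. -/
structure RealStructure (W : Type*) [NormedAddCommGroup W] [InnerProductSpace ℂ W] where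
  conj : W → W
  map_add : ∀ v w : W, conj (v + w) = conj v + conj w
  map_smul : ∀ (c : ℂ) (v : W), conj (c • v) = (starRingEnd ℂ) c • conj v
  invol : ∀ v : W, conj (conj v) = v
  inner_conj : ∀ v w : W, (inner ℂ (conj v) (conj w) : ℂ) = (starRingEnd ℂ) (inner ℂ v w : ℂ)

/-- The real structure of `A ⊕ (−B)`. -/
def pairConj {A B : Type*} [NormedAddCommGroup A] [InnerProductSpace ℂ A]
    [NormedAddCommGroup B] [InnerProductSpace ℂ B]
    (rA : RealStructure A) (rB : RealStructure B) : A × B → A × B :=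
  fun p => (rA.conj p.1, -rB.conj p.2)

/-- The Hermitian inner product of `A ⊕ B`. -/
def pairInner {A B : Type*} [NormedAddCommGroup A] [InnerProductSpace ℂ A]
    [NormedAddCommGroup B] [InnerProductSpace ℂ B] (x y : A × B) : ℂ :=
  (inner ℂ x.1 y.1 : ℂ) + (inner ℂ x.2 y.2 : ℂ)

/-- A Lagrangian `L ⊆ A ⊕ (−B)`. -/
def IsLagrangianPair {A B : Type*} [NormedAddCommGroup A] [InnerProductSpace ℂ A]
    [NormedAddCommGroup B] [InnerProductSpace ℂ B]
    (rA : RealStructure A) (rB : RealStructure B) (L : Submodule ℂ (A × B)) : Prop :=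
  pairConj rA rB '' (L : Set (A × B)) = {y : A × B | ∀ x ∈ L, pairInner x y = 0}

/-- The composition of two linear relations `L₀₁ ⊆ W₀ × W₁`, `L₁₂ ⊆ W₁ × W₂`. -/
def composeRel {W₀ W₁ W₂ : Type*} [NormedAddCommGroup W₀] [InnerProductSpace ℂ W₀]
    [NormedAddCommGroup W₁] [InnerProductSpace ℂ W₁]
    [NormedAddCommGroup W₂] [InnerProductSpace ℂ W₂]
    (L01 : Submodule ℂ (W₀ × W₁)) (L12 : Submodule ℂ (W₁ × W₂)) :
    Submodule ℂ (W₀ × W₂) where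
  carrier := {p | ∃ w₁ : W₁, (p.1, w₁) ∈ L01 ∧ (w₁, p.2) ∈ L12}
  add_mem' := by
    rintro a b ⟨w, hw1, hw2⟩ ⟨w', hw1', hw2'⟩
    exact ⟨w + w', L01.add_mem hw1 hw1', L12.add_mem hw2 hw2'⟩
  zero_mem' := ⟨0, L01.zero_mem, L12.zero_mem⟩
  smul_mem' := by
    rintro c a ⟨w, hw1, hw2⟩
    exact ⟨c • w, L01.smul_mem c hw1, L12.smul_mem c hw2⟩

/-! `L̄₀₂ ⊆ L₀₂^⊥` is a direct computation from the isotropy of `L₀₁` and `L₁₂`. For the converse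
take `z ⊥ L₀₂`. The functional `ψ(v₀, v₁, v₁', v₂) = ⟪z₀, v₀⟫ + ⟪z₂, v₂⟫` on `L₀₁ ⊕ L₁₂` vanishes
on `ker σ`, because `σ = 0` means `(v₀, v₂) ∈ L₀₂`. As `σ` has closed range, the open mapping
theorem factors `ψ` through a bounded functional on the range of `σ`, which by Riesz is `⟪u, ·⟫`.
Then `(z₀, -u) ⊥ L₀₁` and `(u, z₂) ⊥ L₁₂`, so coisotropy gives `(z̄₀, ū) ∈ L₀₁` and
`(ū, -z̄₂) ∈ L₁₂`, i.e. `z̄ ∈ L₀₂`. -/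

open scoped InnerProductSpace

theorem ContinuousLinearMap.exists_inner_eq_of_ker_le_of_isClosed_range
    {𝕜 E F : Type*} [RCLike 𝕜] [NormedAddCommGroup E] [NormedSpace 𝕜 E] [CompleteSpace E]
    [NormedAddCommGroup F] [InnerProductSpace 𝕜 F] [CompleteSpace F]
    (T : E →L[𝕜] F) (hT : IsClosed (Set.range T)) (ψ : E →L[𝕜] 𝕜)
    (hψ : T.ker ≤ ψ.ker) :
    ∃ u : F, ∀ x, ψ x = ⟪u, T x⟫_𝕜 := by
  set R := LinearMap.range (T : E →ₗ[𝕜] F)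
  have hR : IsClosed (R : Set F) := by rwa [LinearMap.coe_range, ContinuousLinearMap.coe_coe]
  have : CompleteSpace R := hR.completeSpace_coe
  have hsurj : Function.Surjective T.rangeRestrict := (T : E →ₗ[𝕜] F).surjective_rangeRestrict
  obtain ⟨φ, hφ⟩ : (ψ : E →ₗ[𝕜] 𝕜) ∈ LinearMap.range (T.rangeRestrict : E →ₗ[𝕜] R).dualMap := by
    rw [LinearMap.range_dualMap_eq_dualAnnihilator_ker, Submodule.mem_dualAnnihilator]
    exact fun x hx => hψ (by simpa using hx)
  have hφc : Continuous φ := by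
    rw [(T.rangeRestrict.isQuotientMap hsurj).continuous_iff]
    have : ⇑φ ∘ ⇑T.rangeRestrict = ψ := congrArg DFunLike.coe hφ
    exact this ▸ ψ.continuous
  refine ⟨(InnerProductSpace.toDual 𝕜 R).symm ⟨φ, hφc⟩, fun x => ?_⟩
  change _ = ⟪_, (T.rangeRestrict x : F)⟫_𝕜
  rw [← Submodule.coe_inner, InnerProductSpace.toDual_symm_apply]
  exact (LinearMap.congr_fun hφ x).symm

namespace RealStructure

variable {W : Type*} [NormedAddCommGroup W] [InnerProductSpace ℂ W] (r : RealStructure W)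

theorem conj_neg (v : W) : r.conj (-v) = -r.conj v :=
  map_neg (AddMonoidHom.mk' r.conj r.map_add) v

theorem norm_conj (v : W) : ‖r.conj v‖ = ‖v‖ := by
  have h := congrArg Complex.re (r.inner_conj v v)
  simp only [inner_self_eq_norm_sq_to_K, Complex.conj_re] at h
  norm_cast at h
  exact (pow_left_inj₀ (norm_nonneg _) (norm_nonneg _) two_ne_zero).1 h

theorem continuous_conj : Continuous r.conj :=
  (AddMonoidHomClass.isometry_of_norm (AddMonoidHom.mk' r.conj r.map_add) r.norm_conj).continuous

end RealStructure

section Lagrangian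

/-- `L̄ ⊆ L^⊥`. -/
def IsIsotropicPair {A B : Type*} [NormedAddCommGroup A] [InnerProductSpace ℂ A]
    [NormedAddCommGroup B] [InnerProductSpace ℂ B]
    (rA : RealStructure A) (rB : RealStructure B) (L : Submodule ℂ (A × B)) : Prop :=
  ∀ x ∈ L, ∀ y ∈ L, pairInner x (pairConj rA rB y) = 0

/-- `L^⊥ ⊆ L̄`. -/
def IsCoisotropicPair {A B : Type*} [NormedAddCommGroup A] [InnerProductSpace ℂ A]
    [NormedAddCommGroup B] [InnerProductSpace ℂ B]
    (rA : RealStructure A) (rB : RealStructure B) (L : Submodule ℂ (A × B)) : Prop :=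
  ∀ p, (∀ x ∈ L, pairInner x p = 0) → pairConj rA rB p ∈ L

variable {A B : Type*} [NormedAddCommGroup A] [InnerProductSpace ℂ A]
  [NormedAddCommGroup B] [InnerProductSpace ℂ B] {rA : RealStructure A} {rB : RealStructure B}
  {L : Submodule ℂ (A × B)}

theorem pairConj_involutive (rA : RealStructure A) (rB : RealStructure B) :
    Function.Involutive (pairConj rA rB) := fun p => by
  simp [pairConj, rA.invol, rB.conj_neg, rB.invol]

theorem continuous_pairConj (rA : RealStructure A) (rB : RealStructure B) :
    Continuous (pairConj rA rB) :=
  (rA.continuous_conj.comp continuous_fst).prodMk (rB.continuous_conj.comp continuous_snd).neg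

theorem isLagrangianPair_iff :
    IsLagrangianPair rA rB L ↔ IsIsotropicPair rA rB L ∧ IsCoisotropicPair rA rB L := by
  have hinv := pairConj_involutive rA rB
  refine ⟨fun h => ⟨fun x hx y hy => ?_, fun p hp => ?_⟩, fun ⟨hiso, hco⟩ => ?_⟩
  · exact (h.subset ⟨y, hy, rfl⟩ : pairConj rA rB y ∈ _) x hx
  · obtain ⟨q, hq, rfl⟩ := h.superset hp
    rwa [hinv q]
  · refine subset_antisymm ?_ fun p hp => ⟨pairConj rA rB p, hco p hp, hinv p⟩
    rintro _ ⟨y, hy, rfl⟩ x hx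
    exact hiso x hx y hy

theorem IsLagrangianPair.isClosed (h : IsLagrangianPair rA rB L) : IsClosed (L : Set (A × B)) := by
  have hL : (L : Set (A × B)) = pairConj rA rB ⁻¹' {y | ∀ x ∈ L, pairInner x y = 0} := by
    rw [← h, Set.preimage_image_eq _ (pairConj_involutive rA rB).injective]
  rw [hL]
  simp only [Set.ofPred_forall]
  refine IsClosed.preimage (continuous_pairConj rA rB) (isClosed_iInter fun x =>
    isClosed_iInter fun _ => isClosed_eq ?_ continuous_const)
  exact (continuous_const.inner continuous_fst).add (continuous_const.inner continuous_snd)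

end Lagrangian

section Composition

variable {W₀ W₁ W₂ : Type*} [NormedAddCommGroup W₀] [InnerProductSpace ℂ W₀]
  [NormedAddCommGroup W₁] [InnerProductSpace ℂ W₁]
  [NormedAddCommGroup W₂] [InnerProductSpace ℂ W₂]
  {L01 : Submodule ℂ (W₀ × W₁)} {L12 : Submodule ℂ (W₁ × W₂)}

theorem exists_inner_sub_eq_of_forall_pairInner_composeRel_eq_zero
    [CompleteSpace W₀] [CompleteSpace W₁] [CompleteSpace W₂]
    (hL01 : IsClosed (L01 : Set (W₀ × W₁))) (hL12 : IsClosed (L12 : Set (W₁ × W₂)))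
    (hclosed : IsClosed {w : W₁ | ∃ x ∈ L01, ∃ y ∈ L12, w = x.2 - y.1})
    {z : W₀ × W₂} (hz : ∀ p ∈ composeRel L01 L12, pairInner p z = 0) :
    ∃ u : W₁, ∀ x ∈ L01, ∀ y ∈ L12, ⟪z.1, x.1⟫_ℂ + ⟪z.2, y.2⟫_ℂ = ⟪u, x.2 - y.1⟫_ℂ := by
  set K := L01.prod L12
  have : CompleteSpace K := (hL01.prod hL12).completeSpace_coe
  let T : K →L[ℂ] W₁ := (.snd ℂ W₀ W₁ ∘L .fst ℂ _ _ - .fst ℂ W₁ W₂ ∘L .snd ℂ _ _) ∘L K.subtypeL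
  let ψ : K →L[ℂ] ℂ := (innerSL ℂ z.1 ∘L .fst ℂ W₀ W₁ ∘L .fst ℂ _ _ +
    innerSL ℂ z.2 ∘L .snd ℂ W₁ W₂ ∘L .snd ℂ _ _) ∘L K.subtypeL
  have hT : Set.range T = {w : W₁ | ∃ x ∈ L01, ∃ y ∈ L12, w = x.2 - y.1} := by
    ext w
    constructor
    · rintro ⟨⟨⟨x, y⟩, hx, hy⟩, rfl⟩
      exact ⟨x, hx, y, hy, rfl⟩
    · rintro ⟨x, hx, y, hy, rfl⟩
      exact ⟨⟨(x, y), hx, hy⟩, rfl⟩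
  have hker : T.ker ≤ ψ.ker := by
    rintro ⟨⟨x, y⟩, hx, hy⟩ hk
    have hxy : x.2 = y.1 := sub_eq_zero.1 hk
    have hp : (x.1, y.2) ∈ composeRel L01 L12 := ⟨x.2, hx, hxy ▸ hy⟩
    have := congrArg (starRingEnd ℂ) (hz _ hp)
    simpa [ψ, pairInner, inner_conj_symm] using this
  obtain ⟨u, hu⟩ := T.exists_inner_eq_of_ker_le_of_isClosed_range (hT ▸ hclosed) ψ hker
  exact ⟨u, fun x hx y hy => hu ⟨(x, y), hx, hy⟩⟩

theorem IsIsotropicPair.composeRel {r₀ : RealStructure W₀} {r₁ : RealStructure W₁}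
    {r₂ : RealStructure W₂} (h01 : IsIsotropicPair r₀ r₁ L01) (h12 : IsIsotropicPair r₁ r₂ L12) :
    IsIsotropicPair r₀ r₂ (composeRel L01 L12) := by
  rintro x ⟨v, hx01, hx12⟩ y ⟨w, hy01, hy12⟩
  have h1 := h01 _ hx01 _ hy01
  have h2 := h12 _ hx12 _ hy12
  simp only [pairInner, pairConj, inner_neg_right] at h1 h2 ⊢
  linear_combination h1 + h2

theorem IsCoisotropicPair.composeRel [CompleteSpace W₀] [CompleteSpace W₁] [CompleteSpace W₂]
    {r₀ : RealStructure W₀} {r₁ : RealStructure W₁} {r₂ : RealStructure W₂}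
    (h01 : IsCoisotropicPair r₀ r₁ L01) (h12 : IsCoisotropicPair r₁ r₂ L12)
    (hL01 : IsClosed (L01 : Set (W₀ × W₁))) (hL12 : IsClosed (L12 : Set (W₁ × W₂)))
    (hclosed : IsClosed {w : W₁ | ∃ x ∈ L01, ∃ y ∈ L12, w = x.2 - y.1}) :
    IsCoisotropicPair r₀ r₂ (composeRel L01 L12) := by
  intro z hz
  obtain ⟨u, hu⟩ := exists_inner_sub_eq_of_forall_pairInner_composeRel_eq_zero hL01 hL12 hclosed hz
  have hperp01 : ∀ x ∈ L01, pairInner x (z.1, -u) = 0 := by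
    intro x hx
    have := hu x hx 0 L12.zero_mem
    simp only [Prod.snd_zero, Prod.fst_zero, inner_zero_right, add_zero, sub_zero] at this
    rw [pairInner, inner_neg_right, ← inner_conj_symm, this, inner_conj_symm, add_neg_cancel]
  have hperp12 : ∀ y ∈ L12, pairInner y (u, z.2) = 0 := by
    intro y hy
    have := hu 0 L01.zero_mem y hy
    simp only [Prod.snd_zero, Prod.fst_zero, inner_zero_right, zero_add, zero_sub,
      inner_neg_right] at this
    rw [pairInner, ← inner_conj_symm y.2, this, map_neg, inner_conj_symm, add_neg_cancel]
  refine ⟨r₁.conj u, ?_, h12 _ hperp12⟩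
  simpa [pairConj, r₁.conj_neg] using h01 _ hperp01

end Composition

variable {W₀ W₁ W₂ : Type*}
  [NormedAddCommGroup W₀] [InnerProductSpace ℂ W₀] [CompleteSpace W₀]
  [NormedAddCommGroup W₁] [InnerProductSpace ℂ W₁] [CompleteSpace W₁]
  [NormedAddCommGroup W₂] [InnerProductSpace ℂ W₂] [CompleteSpace W₂]

/-- If `σ(v₀,v₁,v₁',v₂) = v₁ − v₁'` has closed range when restricted to
`L = L₀₁ ⊕ L₁₂`, then the composition `L₀₂ = L₀₁ ∘ L₁₂` is a Lagrangian in
`W₀ ⊕ (−W₂)`. -/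
theorem composition_lagrangian_of_closed_range
    (r₀ : RealStructure W₀) (r₁ : RealStructure W₁) (r₂ : RealStructure W₂)
    (L01 : Submodule ℂ (W₀ × W₁)) (L12 : Submodule ℂ (W₁ × W₂))
    (h01 : IsLagrangianPair r₀ r₁ L01) (h12 : IsLagrangianPair r₁ r₂ L12)
    (hclosed : IsClosed {w : W₁ | ∃ x ∈ L01, ∃ y ∈ L12, w = x.2 - y.1}) :
    IsLagrangianPair r₀ r₂ (composeRel L01 L12) := by
  obtain ⟨iso01, coiso01⟩ := isLagrangianPair_iff.1 h01
  obtain ⟨iso12, coiso12⟩ := isLagrangianPair_iff.1 h12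
  exact isLagrangianPair_iff.2 ⟨iso01.composeRel iso12,
    coiso01.composeRel coiso12 h01.isClosed h12.isClosed hclosed⟩
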